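/- arXiv:2106.13135 — 4 statements merged into one kernel-verified Lean document; each statement's English description precedes it below -/
import Mathlib

section
/- Completeness of the weighted space: for any γ > 0, let E_γ be the set of nondecreasing, nonnegative, right-continuous functions f : [0,∞) → [0,∞) with ∫_0^∞ e^{−γ t} f(t) dt < ∞, and define d_γ(f,h) = ∫_0^∞ e^{−γ t} |f(t) − h(t)| dt. Then d_γ is a metric on E_γ and the metric space (E_γ, d_γ) is complete. -/
/-!
Multiplying by the weight `e^{-γt}` maps `E_γ` isometrically into `L¹(0,∞)`; this gives all the
metric axioms except definiteness, which holds because right-continuous functions that agree almost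
everywhere agree everywhere. For completeness, an `L¹` limit of a Cauchy sequence is the a.e. limit
of a subsequence, so (after removing the weight) it is a.e. the pointwise limit `G` of nondecreasing
functions, nondecreasing on a co-null set `S`. The function `t ↦ inf {G s | s ∈ S, t < s}` is
nondecreasing and right-continuous, and agrees with `G` at its continuity points in `S`, hence
almost everywhere.
-/

open MeasureTheory Set Filter

/-- Membership in the weighted space `E_γ`: nondecreasing, nonnegative,
right-continuous functions `f : [0,∞) → [0,∞)` (encoded as functions on `ℝ`
vanishing on `(-∞,0)`) with finite exponentially weighted integral
`∫_0^∞ e^{−γ t} f(t) dt < ∞`. -/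
def MemEgamma (γ : ℝ) (f : ℝ → ℝ) : Prop :=
  Monotone f ∧ (∀ t, t < 0 → f t = 0) ∧ (∀ t, 0 ≤ f t) ∧
    (∀ t, 0 ≤ t → ContinuousWithinAt f (Set.Ici t) t) ∧
    IntegrableOn (fun t => Real.exp (-γ * t) * f t) (Set.Ioi 0)

/-- The weighted `L¹` distance `d_γ(f,h) = ∫_0^∞ e^{−γ t} |f(t) − h(t)| dt`. -/
noncomputable def dGamma (γ : ℝ) (f h : ℝ → ℝ) : ℝ :=
  ∫ t in Set.Ioi (0:ℝ), Real.exp (-γ * t) * |f t - h t|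

open Topology

section AeEq

variable {X : Type*} [TopologicalSpace X] [LinearOrder X] [OrderTopology X] [DenselyOrdered X]
  [NoMaxOrder X] [MeasurableSpace X] {μ : Measure X} [μ.IsOpenPosMeasure]

lemma frequently_nhdsGT_of_ae {p : X → Prop} (h : ∀ᵐ x ∂μ, p x) (t : X) :
    ∃ᶠ x in 𝓝[>] t, p x := by
  refine frequently_iff.2 fun hU => ?_
  obtain ⟨u, htu, hsub⟩ := mem_nhdsGT_iff_exists_Ioo_subset.1 hU
  obtain ⟨x, hpx, hx⟩ := (μ.dense_of_ae h).exists_between htu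
  exact ⟨x, hsub hx, hpx⟩

lemma eq_of_ae_eq_of_continuousWithinAt_Ici {Y : Type*} [TopologicalSpace Y] [T2Space Y]
    {f g : X → Y} {t : X} (hfg : ∀ᵐ x ∂μ, t < x → f x = g x)
    (hf : ContinuousWithinAt f (Ici t) t) (hg : ContinuousWithinAt g (Ici t) t) : f t = g t :=
  tendsto_nhds_unique_of_frequently_eq (hf.mono Ioi_subset_Ici_self).tendsto
    (hg.mono Ioi_subset_Ici_self).tendsto
    (((frequently_nhdsGT_of_ae hfg t).and_eventually self_mem_nhdsWithin).mono
      fun _ hx => hx.1 hx.2)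

end AeEq

section RightInfExtension

noncomputable def rightInfExtension (S : Set ℝ) (G : ℝ → ℝ) (t : ℝ) : ℝ :=
  if t < 0 then 0 else sInf (G '' (S ∩ Ioi t))

variable {S : Set ℝ} {G : ℝ → ℝ}

lemma rightInfExtension_of_neg {t : ℝ} (ht : t < 0) : rightInfExtension S G t = 0 :=
  if_pos ht

lemma rightInfExtension_of_nonneg {t : ℝ} (ht : 0 ≤ t) :
    rightInfExtension S G t = sInf (G '' (S ∩ Ioi t)) :=
  if_neg ht.not_gt

lemma bddBelow_image_inter_Ioi (hG₀ : ∀ x ∈ S, 0 ≤ G x) (t : ℝ) :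
    BddBelow (G '' (S ∩ Ioi t)) :=
  ⟨0, forall_mem_image.2 fun x hx => hG₀ x hx.1⟩

lemma rightInfExtension_nonneg (hG₀ : ∀ x ∈ S, 0 ≤ G x) (t : ℝ) :
    0 ≤ rightInfExtension S G t := by
  rcases lt_or_ge t 0 with ht | ht
  · rw [rightInfExtension_of_neg ht]
  · rw [rightInfExtension_of_nonneg ht]
    exact Real.sInf_nonneg (forall_mem_image.2 fun x hx => hG₀ x hx.1)

lemma rightInfExtension_le (hG₀ : ∀ x ∈ S, 0 ≤ G x) {t s : ℝ} (ht : 0 ≤ t) (hs : s ∈ S)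
    (hts : t < s) : rightInfExtension S G t ≤ G s := by
  rw [rightInfExtension_of_nonneg ht]
  exact csInf_le (bddBelow_image_inter_Ioi hG₀ t) (mem_image_of_mem G ⟨hs, hts⟩)

lemma le_rightInfExtension (hS : ∀ t, (S ∩ Ioi t).Nonempty) (hG : MonotoneOn G S) {x : ℝ}
    (hx : x ∈ S) (hx₀ : 0 ≤ x) : G x ≤ rightInfExtension S G x := by
  rw [rightInfExtension_of_nonneg hx₀]
  exact le_csInf ((hS x).image G)
    (forall_mem_image.2 fun s hs => hG hx hs.1 hs.2.le)

lemma monotone_rightInfExtension (hS : ∀ t, (S ∩ Ioi t).Nonempty) (hG₀ : ∀ x ∈ S, 0 ≤ G x) :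
    Monotone (rightInfExtension S G) := by
  intro a b hab
  rcases lt_or_ge a 0 with ha | ha
  · rw [rightInfExtension_of_neg ha]
    exact rightInfExtension_nonneg hG₀ b
  · rw [rightInfExtension_of_nonneg ha, rightInfExtension_of_nonneg (ha.trans hab)]
    exact csInf_le_csInf (bddBelow_image_inter_Ioi hG₀ a) ((hS b).image G)
      (image_mono (inter_subset_inter_right S (Ioi_subset_Ioi hab)))

lemma continuousWithinAt_rightInfExtension (hS : ∀ t, (S ∩ Ioi t).Nonempty)
    (hG₀ : ∀ x ∈ S, 0 ≤ G x) {t : ℝ} (ht : 0 ≤ t) :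
    ContinuousWithinAt (rightInfExtension S G) (Ici t) t := by
  refine tendsto_order.2 ⟨fun a ha => eventually_nhdsWithin_of_forall fun y hy =>
    ha.trans_le (monotone_rightInfExtension hS hG₀ hy), fun b hb => ?_⟩
  rw [rightInfExtension_of_nonneg ht] at hb
  obtain ⟨_, ⟨s, ⟨hsS, hts⟩, rfl⟩, hsb⟩ := exists_lt_of_csInf_lt ((hS t).image G) hb
  filter_upwards [Ico_mem_nhdsGE hts] with y hy
  exact (rightInfExtension_le hG₀ (ht.trans hy.1) hsS hy.2).trans_lt hsb

lemma rightInfExtension_eq_of_continuousAt (hS : ∀ t, (S ∩ Ioi t).Nonempty)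
    (hG₀ : ∀ x ∈ S, 0 ≤ G x) (hG : MonotoneOn G S) {x : ℝ} (hx : x ∈ S) (hx₀ : 0 < x)
    (hcont : ContinuousAt (rightInfExtension S G) x) : rightInfExtension S G x = G x := by
  refine le_antisymm ?_ (le_rightInfExtension hS hG hx hx₀.le)
  refine le_of_tendsto (hcont.tendsto.mono_left (nhdsWithin_le_nhds (s := Iio x))) ?_
  filter_upwards [Ioo_mem_nhdsLT hx₀] with y hy
  exact rightInfExtension_le hG₀ hy.1.le hx hy.2

lemma inter_Ioi_nonempty_of_ae (hS : ∀ᵐ x, 0 < x → x ∈ S) (t : ℝ) :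
    (S ∩ Ioi t).Nonempty :=
  ((frequently_nhdsGT_of_ae hS (max t 0)).and_eventually self_mem_nhdsWithin).exists.imp
    fun _ hx => ⟨hx.1 ((le_max_right t 0).trans_lt hx.2), (le_max_left t 0).trans_lt hx.2⟩

lemma rightInfExtension_ae_eq (hS : ∀ᵐ x, 0 < x → x ∈ S) (hG₀ : ∀ x ∈ S, 0 ≤ G x)
    (hG : MonotoneOn G S) : ∀ᵐ x, 0 < x → rightInfExtension S G x = G x := by
  have hS' := inter_Ioi_nonempty_of_ae hS
  filter_upwards [hS, (monotone_rightInfExtension hS' hG₀).countable_not_continuousAt.ae_notMem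
    volume] with x hxS hcont hx₀
  exact rightInfExtension_eq_of_continuousAt hS' hG₀ hG (hxS hx₀) hx₀ (not_not.1 hcont)

end RightInfExtension

theorem exists_rightContinuous_monotone_of_ae_tendsto {Φ : ℕ → ℝ → ℝ} {G : ℝ → ℝ}
    (hΦ : ∀ k, Monotone (Φ k)) (hΦ₀ : ∀ k x, 0 ≤ Φ k x)
    (hlim : ∀ᵐ x, 0 < x → Tendsto (Φ · x) atTop (𝓝 (G x))) :
    ∃ f : ℝ → ℝ, Monotone f ∧ (∀ t, t < 0 → f t = 0) ∧ (∀ t, 0 ≤ f t) ∧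
      (∀ t, 0 ≤ t → ContinuousWithinAt f (Ici t) t) ∧ ∀ᵐ x, 0 < x → f x = G x := by
  set S := {x : ℝ | 0 < x ∧ Tendsto (Φ · x) atTop (𝓝 (G x))}
  have hS : ∀ᵐ x, 0 < x → x ∈ S := hlim.mono fun x hx hx₀ => ⟨hx₀, hx hx₀⟩
  have hS' := inter_Ioi_nonempty_of_ae hS
  have hG₀ : ∀ x ∈ S, 0 ≤ G x := fun x hx => ge_of_tendsto' hx.2 fun k => hΦ₀ k x
  have hG : MonotoneOn G S := fun x hx y hy hxy =>
    le_of_tendsto_of_tendsto' hx.2 hy.2 fun k => hΦ k hxy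
  exact ⟨rightInfExtension S G, monotone_rightInfExtension hS' hG₀,
    fun t ht => rightInfExtension_of_neg ht, rightInfExtension_nonneg hG₀,
    fun t ht => continuousWithinAt_rightInfExtension hS' hG₀ ht,
    rightInfExtension_ae_eq hS hG₀ hG⟩

lemma exp_mul_exp_mul_of_add_eq_zero {a b : ℝ} (h : a + b = 0) (y : ℝ) :
    Real.exp a * (Real.exp b * y) = y := by
  rw [← mul_assoc, ← Real.exp_add, h, Real.exp_zero, one_mul]

namespace MemEgamma

variable {γ : ℝ} {f g : ℝ → ℝ}

noncomputable def toL1 (hf : MemEgamma γ f) : ℝ →₁[volume.restrict (Ioi 0)] ℝ :=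
  hf.2.2.2.2.toL1 _

lemma coeFn_toL1 (hf : MemEgamma γ f) :
    hf.toL1 =ᵐ[volume.restrict (Ioi 0)] fun t => Real.exp (-γ * t) * f t :=
  Integrable.coeFn_toL1 _

lemma dGamma_eq_dist (hf : MemEgamma γ f) (hg : MemEgamma γ g) :
    dGamma γ f g = dist hf.toL1 hg.toL1 := by
  rw [L1.dist_eq_integral_dist, dGamma]
  refine integral_congr_ae ?_
  filter_upwards [hf.coeFn_toL1, hg.coeFn_toL1] with t hft hgt
  rw [hft, hgt, Real.dist_eq, ← mul_sub, abs_mul, abs_of_pos (Real.exp_pos _)]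

lemma eq_of_toL1_eq (hf : MemEgamma γ f) (hg : MemEgamma γ g) (h : hf.toL1 = hg.toL1) :
    f = g := by
  have hae : ∀ᵐ x, 0 < x → f x = g x := by
    refine (ae_restrict_iff' measurableSet_Ioi).1 ?_
    filter_upwards [hf.coeFn_toL1.symm.trans (h ▸ hg.coeFn_toL1)] with x hx
    simpa [(Real.exp_pos _).ne'] using hx
  funext t
  rcases lt_or_ge t 0 with ht | ht
  · rw [hf.2.1 t ht, hg.2.1 t ht]
  · exact eq_of_ae_eq_of_continuousWithinAt_Ici (μ := volume)
      (hae.mono fun x hx htx => hx (ht.trans_lt htx)) (hf.2.2.2.1 t ht) (hg.2.2.2.1 t ht)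

lemma dGamma_eq_zero_iff (hf : MemEgamma γ f) (hg : MemEgamma γ g) :
    dGamma γ f g = 0 ↔ f = g := by
  rw [dGamma_eq_dist hf hg, dist_eq_zero]
  exact ⟨eq_of_toL1_eq hf hg, by rintro rfl; rfl⟩

theorem exists_tendsto_dGamma_of_cauchy {F : ℕ → ℝ → ℝ} (hF : ∀ n, MemEgamma γ (F n))
    (hC : ∀ ε : ℝ, 0 < ε → ∃ N : ℕ, ∀ m ≥ N, ∀ n ≥ N, dGamma γ (F m) (F n) < ε) :
    ∃ f : ℝ → ℝ, MemEgamma γ f ∧ Tendsto (fun n => dGamma γ (F n) f) atTop (𝓝 0) := by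
  have hcauchy : CauchySeq fun n => (hF n).toL1 := Metric.cauchySeq_iff.2 fun ε hε => by
    simpa only [← dGamma_eq_dist] using hC ε hε
  obtain ⟨u, hu⟩ := cauchySeq_tendsto_of_complete hcauchy
  obtain ⟨ns, -, hns⟩ := (tendstoInMeasure_of_tendsto_Lp hu).exists_seq_tendsto_ae
  have hlim : ∀ᵐ x, 0 < x →
      Tendsto (fun k => F (ns k) x) atTop (𝓝 (Real.exp (γ * x) * u x)) := by
    refine (ae_restrict_iff' measurableSet_Ioi).1 ?_
    filter_upwards [hns, ae_all_iff.2 fun k => (hF (ns k)).coeFn_toL1] with x hx hcoe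
    refine ((hx.congr hcoe).const_mul (Real.exp (γ * x))).congr fun k => ?_
    exact exp_mul_exp_mul_of_add_eq_zero (by ring) _
  obtain ⟨f, hf_mono, hf_neg, hf_nonneg, hf_cont, hfG⟩ :=
    exists_rightContinuous_monotone_of_ae_tendsto (fun k => (hF (ns k)).1)
      (fun k => (hF (ns k)).2.2.1) hlim
  have hfu : (fun t => Real.exp (-γ * t) * f t) =ᵐ[volume.restrict (Ioi 0)] u := by
    filter_upwards [(ae_restrict_iff' measurableSet_Ioi).2 hfG] with x hx
    rw [hx, exp_mul_exp_mul_of_add_eq_zero (by ring)]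
  have hu_int := L1.integrable_coeFn u
  have hf : MemEgamma γ f := ⟨hf_mono, hf_neg, hf_nonneg, hf_cont, hu_int.congr hfu.symm⟩
  have hf_toL1 : hf.toL1 = u :=
    ((Integrable.toL1_eq_toL1_iff _ _ _ hu_int).2 hfu).trans (Integrable.toL1_coeFn u hu_int)
  refine ⟨f, hf, ?_⟩
  refine (tendsto_iff_dist_tendsto_zero.1 hu).congr fun n => ?_
  rw [dGamma_eq_dist (hF n) hf, hf_toL1]

end MemEgamma

theorem Egamma_metric_complete_general (γ : ℝ) :
    (∀ f g, MemEgamma γ f → MemEgamma γ g → 0 ≤ dGamma γ f g) ∧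
    (∀ f g, MemEgamma γ f → MemEgamma γ g → dGamma γ f g = dGamma γ g f) ∧
    (∀ f g h, MemEgamma γ f → MemEgamma γ g → MemEgamma γ h →
      dGamma γ f h ≤ dGamma γ f g + dGamma γ g h) ∧
    (∀ f g, MemEgamma γ f → MemEgamma γ g → (dGamma γ f g = 0 ↔ f = g)) ∧
    (∀ F : ℕ → ℝ → ℝ, (∀ n, MemEgamma γ (F n)) →
      (∀ ε : ℝ, 0 < ε → ∃ N : ℕ, ∀ m ≥ N, ∀ n ≥ N, dGamma γ (F m) (F n) < ε) →
      ∃ f : ℝ → ℝ, MemEgamma γ f ∧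
        Tendsto (fun n => dGamma γ (F n) f) atTop (nhds 0)) := by
  refine ⟨fun f g hf hg => ?_, fun f g hf hg => ?_, fun f g h hf hg hh => ?_,
    fun f g hf hg => hf.dGamma_eq_zero_iff hg,
    fun F hF hC => MemEgamma.exists_tendsto_dGamma_of_cauchy hF hC⟩
  · rw [hf.dGamma_eq_dist hg]
    exact dist_nonneg
  · rw [hf.dGamma_eq_dist hg, hg.dGamma_eq_dist hf, dist_comm]
  · rw [hf.dGamma_eq_dist hh, hf.dGamma_eq_dist hg, hg.dGamma_eq_dist hh]
    exact dist_triangle _ _ _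

/-- **Completeness of the weighted space `(E_γ, d_γ)`.**
For any `γ > 0`, `d_γ` is a metric on `E_γ` (nonnegative, symmetric, satisfying
the triangle inequality, and vanishing exactly on pairs of equal functions),
and the metric space `(E_γ, d_γ)` is complete: every Cauchy sequence in `E_γ`
converges in the distance `d_γ` to an element of `E_γ`. -/
theorem Egamma_metric_complete (γ : ℝ) (hγ : 0 < γ) :
    (∀ f g, MemEgamma γ f → MemEgamma γ g → 0 ≤ dGamma γ f g) ∧
    (∀ f g, MemEgamma γ f → MemEgamma γ g → dGamma γ f g = dGamma γ g f) ∧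
    (∀ f g h, MemEgamma γ f → MemEgamma γ g → MemEgamma γ h →
      dGamma γ f h ≤ dGamma γ f g + dGamma γ g h) ∧
    (∀ f g, MemEgamma γ f → MemEgamma γ g → (dGamma γ f g = 0 ↔ f = g)) ∧
    (∀ F : ℕ → ℝ → ℝ, (∀ n, MemEgamma γ (F n)) →
      (∀ ε : ℝ, 0 < ε → ∃ N : ℕ, ∀ m ≥ N, ∀ n ≥ N, dGamma γ (F m) (F n) < ε) →
      ∃ f : ℝ → ℝ, MemEgamma γ f ∧
        Tendsto (fun n => dGamma γ (F n) f) atTop (nhds 0)) :=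
  Egamma_metric_complete_general γ
end

section
/- Absolute continuity of solutions of the delay equation: if a nondecreasing function B : [0,∞) → [0,∞) satisfies the delay equation (★), then for all t ≥ 0 and u ≥ 0 one has B(t+u) − B(t) ≤ S0 ∫_t^{t+u} c(s) ( ∫_{[0,s]} τ(s−a) B(da) + I0 τ̄(s) ) ds. Consequently B is absolutely continuous on [0,∞), i.e. there exists a nonnegative locally integrable function b with B(t) = ∫_0^t b(s) ds for all t ≥ 0. -/
/-!
Write `Λ(s) = c(s) (∫_{[0,s]} τ(s−a) B(da) + I0 τ̄(s))`, so that (★) reads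
`B(t) = S0 (1 − exp (−∫_0^t Λ))`. By Tonelli, `∫_0^T ∫_{[0,s]} τ(s−a) B(da) ds ≤ R0 · B(da)([0,T])`
and `∫_0^∞ τ̄ ≤ R0 ∫ g`, so `Λ` is locally integrable (otherwise the Bochner integrals in (★)
would be junk). Since `x ↦ exp (−x)` is 1-Lipschitz on `[0,∞)`, the increments of `B` are
dominated by `S0` times those of the primitive of `Λ`. This domination passes the absolute
continuity of the primitive on to `B`, and `b = B'` by the fundamental theorem of calculus for
absolutely continuous functions.
-/

open MeasureTheory Set Classical

/-- The Lebesgue–Stieltjes measure associated to a nondecreasing function `B`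
(with junk value `0` if `B` is not monotone). -/
noncomputable def stieltjesMeasureOf (B : ℝ → ℝ) : Measure ℝ :=
  if h : Monotone B then h.stieltjesFunction.measure else 0

/-- `B` is a nondecreasing, nonnegative solution of the delay equation (★)
(functions on `[0,∞)` encoded as functions on `ℝ` vanishing on `(-∞,0)`):
for `t ≥ 0`,
`B(t) = S0 (1 − exp(−∫_0^t c(s) (∫_{[0,s]} τ(s−a) B(da) + I0 τbar(s)) ds))`
with `S0 = 1 − I0`. -/
def IsDelaySolution (I0 : ℝ) (c τ τbar : ℝ → ℝ) (B : ℝ → ℝ) : Prop :=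
  Monotone B ∧ (∀ t, t < 0 → B t = 0) ∧ (∀ t, 0 ≤ B t) ∧
    ∀ t, 0 ≤ t →
      B t = (1 - I0) *
        (1 - Real.exp (-(∫ s in Set.Ioc (0:ℝ) t,
          c s * ((∫ a in Set.Icc (0:ℝ) s, τ (s - a) ∂(stieltjesMeasureOf B))
            + I0 * τbar s))))

open Filter
open scoped ENNReal

theorem Real.exp_neg_sub_exp_neg_le {x y : ℝ} (hx : 0 ≤ x) (hxy : x ≤ y) :
    Real.exp (-x) - Real.exp (-y) ≤ y - x := by
  have hsplit : Real.exp (-y) = Real.exp (-x) * Real.exp (-(y - x)) := by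
    rw [← Real.exp_add]; ring_nf
  calc Real.exp (-x) - Real.exp (-y) = Real.exp (-x) * (1 - Real.exp (-(y - x))) := by
        rw [hsplit]; ring
    _ ≤ 1 * (y - x) :=
        mul_le_mul (Real.exp_le_one_iff.mpr (neg_nonpos.mpr hx))
          (by linarith [Real.add_one_le_exp (-(y - x))])
          (sub_nonneg.mpr (Real.exp_le_one_iff.mpr (by linarith))) zero_le_one
    _ = y - x := one_mul _

theorem AbsolutelyContinuousOnInterval.of_dist_le {X Y : Type*} [PseudoMetricSpace X]
    [PseudoMetricSpace Y] {f : ℝ → X} {g : ℝ → Y} {a b : ℝ}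
    (hg : AbsolutelyContinuousOnInterval g a b)
    (hfg : ∀ x ∈ uIcc a b, ∀ y ∈ uIcc a b, dist (f x) (f y) ≤ dist (g x) (g y)) :
    AbsolutelyContinuousOnInterval f a b := by
  refine squeeze_zero' (Eventually.of_forall fun _ => Finset.sum_nonneg fun _ _ => dist_nonneg)
    ?_ hg
  rw [eventually_inf_principal]
  filter_upwards with E hE
  exact Finset.sum_le_sum fun i hi => hfg _ (hE.1 i hi).1 _ (hE.1 i hi).2

theorem MonotoneOn.absolutelyContinuousOnInterval_of_sub_le_setIntegral {B φ : ℝ → ℝ}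
    {a b : ℝ} (hab : a ≤ b) (hB : MonotoneOn B (Icc a b)) (hφ : IntegrableOn φ (Ioc a b))
    (hle : ∀ x ∈ Icc a b, ∀ y ∈ Icc a b, x ≤ y → B y - B x ≤ ∫ s in Ioc x y, φ s) :
    AbsolutelyContinuousOnInterval B a b := by
  have hφi : IntervalIntegrable φ volume a b :=
    (intervalIntegrable_iff_integrableOn_Ioc_of_le hab).mpr hφ
  refine (hφi.absolutelyContinuousOnInterval_intervalIntegral (c := a) left_mem_uIcc).of_dist_le ?_
  rw [uIcc_of_le hab]
  suffices key : ∀ x ∈ Icc a b, ∀ y ∈ Icc a b, x ≤ y →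
      dist (B x) (B y) ≤ dist (∫ v in a..x, φ v) (∫ v in a..y, φ v) by
    intro x hx y hy
    rcases le_total x y with hxy | hyx
    · exact key x hx y hy hxy
    · rw [dist_comm, dist_comm (∫ v in a..x, φ v)]; exact key y hy x hx hyx
  intro x hx y hy hxy
  have hsub : (∫ v in a..y, φ v) - ∫ v in a..x, φ v = ∫ s in Ioc x y, φ s := by
    rw [intervalIntegral.integral_interval_sub_left
      (hφi.mono_set (uIcc_subset_uIcc_left (uIcc_of_le hab ▸ hy)))
      (hφi.mono_set (uIcc_subset_uIcc_left (uIcc_of_le hab ▸ hx))),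
      intervalIntegral.integral_of_le hxy]
  calc dist (B x) (B y) = B y - B x := by
        rw [dist_comm, Real.dist_eq, abs_of_nonneg (sub_nonneg.mpr (hB hx hy hxy))]
    _ ≤ ∫ s in Ioc x y, φ s := hle x hx y hy hxy
    _ ≤ dist (∫ v in a..x, φ v) (∫ v in a..y, φ v) := by
        rw [dist_comm, Real.dist_eq, hsub]
        exact le_abs_self _

theorem setLIntegral_comp_sub_le {f : ℝ → ℝ≥0∞} {s : Set ℝ} {a : ℝ} (hs : s ⊆ Ici a) :
    ∫⁻ x in s, f (x - a) ≤ ∫⁻ x in Ioi 0, f x :=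
  calc ∫⁻ x in s, f (x - a) ≤ ∫⁻ x in Ici a, f (x - a) := lintegral_mono_set hs
    _ = ∫⁻ x, (Ici 0).indicator f (x - a) := by
        rw [← lintegral_indicator measurableSet_Ici]
        congr 1 with x
        simp [indicator, sub_nonneg]
    _ = ∫⁻ x in Ioi 0, f x := by
        rw [lintegral_sub_right_eq_self, lintegral_indicator measurableSet_Ici,
          setLIntegral_congr Ioi_ae_eq_Ici]

theorem lintegral_Ioc_lintegral_Icc_comp_sub_le {μ : Measure ℝ} [SFinite μ] {f : ℝ → ℝ≥0∞}
    (hf : Measurable f) (T : ℝ) :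
    ∫⁻ s in Ioc 0 T, ∫⁻ a in Icc 0 s, f (s - a) ∂μ ≤ (∫⁻ x in Ioi 0, f x) * μ (Icc 0 T) := by
  have hmeas : Measurable fun p : ℝ × ℝ => (Iic p.1).indicator (fun a => f (p.1 - a)) p.2 :=
    Measurable.ite (measurableSet_le measurable_snd measurable_fst)
      (hf.comp (measurable_fst.sub measurable_snd)) measurable_const
  calc ∫⁻ s in Ioc 0 T, ∫⁻ a in Icc 0 s, f (s - a) ∂μ
      ≤ ∫⁻ s in Ioc 0 T, ∫⁻ a in Icc 0 T, (Iic s).indicator (fun a => f (s - a)) a ∂μ := by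
        refine setLIntegral_mono' measurableSet_Ioc fun s hs => ?_
        rw [setLIntegral_indicator measurableSet_Iic]
        exact lintegral_mono_set fun a ha => ⟨ha.2, ha.1, ha.2.trans hs.2⟩
    _ = ∫⁻ a in Icc 0 T, (∫⁻ s in Ioc 0 T, (Ici a).indicator (fun s => f (s - a)) s) ∂μ :=
        lintegral_lintegral_swap hmeas.aemeasurable
    _ ≤ ∫⁻ a in Icc 0 T, (∫⁻ x in Ioi 0, f x) ∂μ := by
        refine lintegral_mono fun a => ?_
        rw [setLIntegral_indicator measurableSet_Ici]
        exact setLIntegral_comp_sub_le inter_subset_left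
    _ = (∫⁻ x in Ioi 0, f x) * μ (Icc 0 T) := setLIntegral_const _ _

theorem lintegral_Ioi_lintegral_Ioi_mul_comp_add_le {f g : ℝ → ℝ≥0∞} (hf : Measurable f)
    (hg : Measurable g) :
    ∫⁻ s in Ioi 0, ∫⁻ a in Ioi 0, g a * f (a + s) ≤
      (∫⁻ a in Ioi 0, g a) * ∫⁻ x in Ioi 0, f x := by
  have hmeas : Measurable fun p : ℝ × ℝ => g p.2 * f (p.2 + p.1) :=
    (hg.comp measurable_snd).mul (hf.comp (measurable_snd.add measurable_fst))
  calc ∫⁻ s in Ioi 0, ∫⁻ a in Ioi 0, g a * f (a + s)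
      = ∫⁻ a in Ioi 0, g a * ∫⁻ s in Ioi 0, f (a + s) := by
        rw [lintegral_lintegral_swap hmeas.aemeasurable]
        exact lintegral_congr fun a => lintegral_const_mul _ (hf.comp (measurable_const_add a))
    _ ≤ ∫⁻ a in Ioi 0, g a * ∫⁻ x in Ioi 0, f x := by
        refine setLIntegral_mono' measurableSet_Ioi fun a ha => mul_le_mul_right ?_ _
        simp only [add_comm a, ← sub_neg_eq_add]
        exact setLIntegral_comp_sub_le fun s hs => by
          simp only [mem_Ici]; linarith [mem_Ioi.mp ha, mem_Ioi.mp hs]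
    _ = (∫⁻ a in Ioi 0, g a) * ∫⁻ x in Ioi 0, f x := lintegral_mul_const _ hg

theorem integrableOn_Ioc_integral_Icc_comp_sub {μ : Measure ℝ} [IsLocallyFiniteMeasure μ]
    {τ : ℝ → ℝ} (hτm : Measurable τ) (hτ : IntegrableOn τ (Ioi 0)) (T : ℝ) :
    IntegrableOn (fun s => ∫ a in Icc 0 s, τ (s - a) ∂μ) (Ioc 0 T) := by
  have hmeas : Measurable fun p : ℝ × ℝ => (Icc 0 p.1).indicator (fun a => τ (p.1 - a)) p.2 :=
    Measurable.ite ((measurableSet_le measurable_const measurable_snd).inter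
      (measurableSet_le measurable_snd measurable_fst))
      (hτm.comp (measurable_fst.sub measurable_snd)) measurable_const
  refine ⟨?_, ?_⟩
  · simp_rw [← integral_indicator measurableSet_Icc]
    exact hmeas.stronglyMeasurable.integral_prod_right'.aestronglyMeasurable
  calc ∫⁻ s in Ioc 0 T, ‖∫ a in Icc 0 s, τ (s - a) ∂μ‖ₑ
      ≤ ∫⁻ s in Ioc 0 T, ∫⁻ a in Icc 0 s, ‖τ (s - a)‖ₑ ∂μ :=
        lintegral_mono fun _ => enorm_integral_le_lintegral_enorm _
    _ ≤ (∫⁻ x in Ioi 0, ‖τ x‖ₑ) * μ (Icc 0 T) :=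
        lintegral_Ioc_lintegral_Icc_comp_sub_le hτm.enorm T
    _ < ∞ := ENNReal.mul_lt_top hτ.2 measure_Icc_lt_top

theorem integrableOn_Ioi_integral_mul_comp_add {g τ : ℝ → ℝ} (hgm : Measurable g)
    (hτm : Measurable τ) (hg : IntegrableOn g (Ioi 0)) (hτ : IntegrableOn τ (Ioi 0)) :
    IntegrableOn (fun s => ∫ a in Ioi 0, g a * τ (a + s)) (Ioi 0) := by
  have hmeas : Measurable fun p : ℝ × ℝ => g p.2 * τ (p.2 + p.1) :=
    (hgm.comp measurable_snd).mul (hτm.comp (measurable_snd.add measurable_fst))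
  refine ⟨hmeas.stronglyMeasurable.integral_prod_right'.aestronglyMeasurable, ?_⟩
  calc ∫⁻ s in Ioi 0, ‖∫ a in Ioi 0, g a * τ (a + s)‖ₑ
      ≤ ∫⁻ s in Ioi 0, ∫⁻ a in Ioi 0, ‖g a‖ₑ * ‖τ (a + s)‖ₑ := by
        refine lintegral_mono fun s => ?_
        simpa only [enorm_mul] using
          enorm_integral_le_lintegral_enorm (μ := volume.restrict (Ioi 0)) fun a => g a * τ (a + s)
    _ ≤ (∫⁻ a in Ioi 0, ‖g a‖ₑ) * ∫⁻ x in Ioi 0, ‖τ x‖ₑ :=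
        lintegral_Ioi_lintegral_Ioi_mul_comp_add_le hτm.enorm hgm.enorm
    _ < ∞ := ENNReal.mul_lt_top hg.2 hτ.2

instance isLocallyFiniteMeasure_stieltjesMeasureOf (B : ℝ → ℝ) :
    IsLocallyFiniteMeasure (stieltjesMeasureOf B) := by
  unfold stieltjesMeasureOf
  split <;> infer_instance

noncomputable def forceOfInfection (I0 : ℝ) (c τ τbar B : ℝ → ℝ) (s : ℝ) : ℝ :=
  c s * ((∫ a in Icc (0:ℝ) s, τ (s - a) ∂(stieltjesMeasureOf B)) + I0 * τbar s)

theorem forceOfInfection_nonneg {I0 s : ℝ} {c τ τbar : ℝ → ℝ} (B : ℝ → ℝ) (hI0 : 0 ≤ I0)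
    (hc : 0 ≤ c s) (hτ : ∀ a, 0 ≤ τ a) (hτbar : 0 ≤ τbar s) :
    0 ≤ forceOfInfection I0 c τ τbar B s :=
  mul_nonneg hc (add_nonneg (integral_nonneg fun _ => hτ _) (mul_nonneg hI0 hτbar))

theorem integrableOn_forceOfInfection {I0 C : ℝ} {c τ τbar : ℝ → ℝ} (B : ℝ → ℝ)
    (hcm : Measurable c) (hcC : ∀ t, 0 ≤ t → |c t| ≤ C) (hτm : Measurable τ)
    (hτ : IntegrableOn τ (Ioi 0)) (hτbar : IntegrableOn τbar (Ioi 0)) (T : ℝ) :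
    IntegrableOn (forceOfInfection I0 c τ τbar B) (Ioc 0 T) := by
  refine Integrable.bdd_mul (c := C) ?_ hcm.aestronglyMeasurable ?_
  · exact (integrableOn_Ioc_integral_Icc_comp_sub hτm hτ T).add
      ((hτbar.mono_set Ioc_subset_Ioi_self).const_mul I0)
  · exact (ae_restrict_iff' measurableSet_Ioc).mpr (ae_of_all _ fun t ht => hcC t ht.1.le)

theorem sub_le_mul_setIntegral_of_eq_mul_one_sub_exp {B φ : ℝ → ℝ} {S : ℝ} (hS : 0 ≤ S)
    (hφ : ∀ s, 0 ≤ s → 0 ≤ φ s) (hint : ∀ t, IntegrableOn φ (Ioc 0 t))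
    (hB : ∀ t, 0 ≤ t → B t = S * (1 - Real.exp (-∫ s in Ioc 0 t, φ s)))
    {x y : ℝ} (hx : 0 ≤ x) (hxy : x ≤ y) :
    B y - B x ≤ S * ∫ s in Ioc x y, φ s := by
  set X := ∫ s in Ioc 0 x, φ s
  set I := ∫ s in Ioc x y, φ s
  have hsplit : ∫ s in Ioc 0 y, φ s = X + I := by
    rw [← Ioc_union_Ioc_eq_Ioc hx hxy, setIntegral_union (Ioc_disjoint_Ioc_of_le le_rfl)
      measurableSet_Ioc ((hint y).mono_set (Ioc_subset_Ioc_right hxy))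
      ((hint y).mono_set (Ioc_subset_Ioc_left hx))]
  have hX : 0 ≤ X := setIntegral_nonneg measurableSet_Ioc fun s hs => hφ s hs.1.le
  have hI : 0 ≤ I := setIntegral_nonneg measurableSet_Ioc fun s hs => hφ s (hx.trans hs.1.le)
  calc B y - B x = S * (Real.exp (-X) - Real.exp (-(X + I))) := by
        rw [hB y (hx.trans hxy), hB x hx, hsplit]; ring
    _ ≤ S * (X + I - X) :=
        mul_le_mul_of_nonneg_left (Real.exp_neg_sub_exp_neg_le hX (le_add_of_nonneg_right hI)) hS
    _ = S * I := by ring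

/-- **Absolute continuity of solutions of the delay equation.**
If a nondecreasing `B : [0,∞) → [0,∞)` satisfies the delay equation (★), then
for all `t, u ≥ 0`,
`B(t+u) − B(t) ≤ S0 ∫_t^{t+u} c(s) (∫_{[0,s]} τ(s−a) B(da) + I0 τbar(s)) ds`,
and consequently `B` is absolutely continuous on `[0,∞)`: there exists a
nonnegative locally integrable `b` with `B(t) = ∫_0^t b(s) ds` for all `t ≥ 0`. -/
theorem delay_solution_absolutely_continuous
    (I0 : ℝ) (hI0 : I0 ∈ Set.Ioo (0:ℝ) 1)
    (c : ℝ → ℝ) (hcm : Measurable c) (hc01 : ∀ t, 0 ≤ t → c t ∈ Set.Icc (0:ℝ) 1)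
    (g : ℝ → ℝ) (hgm : Measurable g) (hg0 : ∀ a, 0 ≤ g a)
    (hg1 : ∫ a in Set.Ioi (0:ℝ), g a = 1)
    (τ : ℝ → ℝ) (hτm : Measurable τ) (hτ0 : ∀ a, 0 ≤ τ a)
    (hτint : IntegrableOn τ (Set.Ioi 0))
    (τbar : ℝ → ℝ) (hτbar : ∀ s, τbar s = ∫ a in Set.Ioi (0:ℝ), g a * τ (a + s))
    (B : ℝ → ℝ) (hB : IsDelaySolution I0 c τ τbar B) :
    (∀ t u : ℝ, 0 ≤ t → 0 ≤ u →
      B (t + u) - B t ≤ (1 - I0) *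
        ∫ s in Set.Ioc t (t + u),
          c s * ((∫ a in Set.Icc (0:ℝ) s, τ (s - a) ∂(stieltjesMeasureOf B))
            + I0 * τbar s)) ∧
    ∃ b : ℝ → ℝ, (∀ s, 0 ≤ b s) ∧ (∀ t, 0 ≤ t → IntegrableOn b (Set.Icc 0 t)) ∧
      ∀ t, 0 ≤ t → B t = ∫ s in Set.Ioc (0:ℝ) t, b s := by
  obtain ⟨hmono, -, -, hsol⟩ := hB
  set Λ := forceOfInfection I0 c τ τbar B
  have hτbar_int : IntegrableOn τbar (Ioi 0) := by
    rw [funext hτbar]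
    exact integrableOn_Ioi_integral_mul_comp_add hgm hτm
      (Integrable.of_integral_ne_zero (hg1 ▸ one_ne_zero)) hτint
  have hΛ_int : ∀ T, IntegrableOn Λ (Ioc 0 T) :=
    integrableOn_forceOfInfection B hcm
      (fun t ht => abs_le.mpr ⟨by linarith [(hc01 t ht).1], (hc01 t ht).2⟩) hτm hτint hτbar_int
  have hΛ_nonneg : ∀ s, 0 ≤ s → 0 ≤ Λ s := fun s hs =>
    forceOfInfection_nonneg B hI0.1.le (hc01 s hs).1 hτ0
      (hτbar s ▸ integral_nonneg fun a => mul_nonneg (hg0 a) (hτ0 _))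
  have hinc : ∀ x y, 0 ≤ x → x ≤ y → B y - B x ≤ (1 - I0) * ∫ s in Ioc x y, Λ s :=
    fun x y => sub_le_mul_setIntegral_of_eq_mul_one_sub_exp (by linarith [hI0.2])
      hΛ_nonneg hΛ_int hsol
  have hac : ∀ t, 0 ≤ t → AbsolutelyContinuousOnInterval B 0 t := fun t ht =>
    (hmono.monotoneOn _).absolutelyContinuousOnInterval_of_sub_le_setIntegral ht
      ((hΛ_int t).const_mul (1 - I0)) fun x hx y _ hxy => by
        rw [integral_const_mul]; exact hinc x y hx.1 hxy
  have hB0 : B 0 = 0 := by simpa using hsol 0 le_rfl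
  refine ⟨fun t u ht hu => hinc t (t + u) ht (by linarith), deriv B,
    fun _ => hmono.deriv_nonneg, fun t ht => ?_, fun t ht => ?_⟩
  · exact (integrableOn_Icc_iff_integrableOn_Ioc (by simp)).2
      ((intervalIntegrable_iff_integrableOn_Ioc_of_le ht).mp (hac t ht).intervalIntegrable_deriv)
  · rw [← intervalIntegral.integral_of_le ht, (hac t ht).integral_deriv_eq_sub, hB0, sub_zero]
end

section
/- Renewal equation for the infection density: let B be a nondecreasing solution of the delay equation (★), write B(t) = ∫_0^t b(s) ds for its density b and set S(t) = S0 − B(t). Then for Lebesgue-almost every t ≥ 0, b(t) = c(t) S(t) ( ∫_0^t b(a) τ(t−a) da + I0 τ̄(t) ); equivalently, extending b to the negative half-line by b(−u) := I0 g(u) for u > 0, one has b(t) = c(t) S(t) ∫_{−∞}^t b(a) τ(t−a) da for almost every t ≥ 0. -/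
/-!
Write `f(s) = c(s) (∫_{[0,s]} τ(s−a) B(da) + I0 τbar(s))`, so that (★) reads
`B = S0 (1 − exp(−G))` with `G(t) = ∫_0^t f`. Since `B(da) = b(a) da`, the Stieltjes integral
is `∫_0^s b(a) τ(s−a) da`, and together with `I0 τbar(s)` it is the causal convolution of the
extended density with `τ`; truncated at any time `T` this is a convolution of two integrable
functions, so `f` is locally integrable. By the Lebesgue differentiation theorem `B' = b` and
`G' = f` almost everywhere, and differentiating (★) gives `b = S0 exp(−G) f = S f`.
-/

open MeasureTheory Set Classical

theorem locallyIntegrable_indicator_Ioi {E : Type*} [NormedAddCommGroup E] {f : ℝ → E}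
    (hf : ∀ T, IntegrableOn f (Ioc 0 T)) : LocallyIntegrable ((Ioi 0).indicator f) :=
  fun x => ⟨Iic (x + 1), Iic_mem_nhds (lt_add_one x), by
    rw [integrableOn_indicator_iff measurableSet_Ioi, Ioi_inter_Iic]
    exact hf _⟩

variable {E : Type*} [NormedAddCommGroup E] [NormedSpace ℝ E]

theorem integral_Ioc_zero_eq_intervalIntegral_indicator (f : ℝ → E) (t : ℝ) :
    ∫ s in Ioc 0 t, f s = ∫ s in (0)..t, (Ioi 0).indicator f s := by
  rcases le_total 0 t with ht | ht
  · rw [intervalIntegral.integral_of_le ht, setIntegral_indicator measurableSet_Ioi,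
      inter_eq_left.2 Ioc_subset_Ioi_self]
  · rw [intervalIntegral.integral_of_ge ht, setIntegral_indicator measurableSet_Ioi,
      Ioc_eq_empty (not_lt.2 ht), Ioc_inter_Ioi, Ioc_eq_empty (by simp [ht])]
    simp

theorem ae_hasDerivAt_integral_Ioc_zero [CompleteSpace E] {f : ℝ → E}
    (hf : ∀ T, IntegrableOn f (Ioc 0 T)) :
    ∀ᵐ t, 0 < t → HasDerivAt (fun u => ∫ s in Ioc 0 u, f s) (f t) t := by
  filter_upwards [LocallyIntegrable.ae_hasDerivAt_integral (locallyIntegrable_indicator_Ioi hf)]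
    with t ht hpos
  simpa only [integral_Ioc_zero_eq_intervalIntegral_indicator f,
    indicator_of_mem (mem_Ioi.2 hpos)] using ht 0

theorem stieltjesMeasureOf_intervalIntegral {f : ℝ → ℝ} (hf : LocallyIntegrable f)
    (hf0 : 0 ≤ f) (a : ℝ) :
    stieltjesMeasureOf (fun x => ∫ t in a..x, f t)
      = volume.withDensity (fun x => ENNReal.ofReal (f x)) := by
  have hint : ∀ x y, IntervalIntegrable f volume x y := fun x y =>
    (hf.integrableOn_isCompact isCompact_uIcc).intervalIntegrable
  have hsub : ∀ x y, (∫ t in a..y, f t) - ∫ t in a..x, f t = ∫ t in x..y, f t := fun x y =>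
    intervalIntegral.integral_interval_sub_left (hint a y) (hint a x)
  have hmono : Monotone fun x => ∫ t in a..x, f t := fun x y hxy =>
    sub_nonneg.1 ((hsub x y).symm ▸ intervalIntegral.integral_nonneg hxy fun t _ => hf0 t)
  have hright : ∀ x, Function.rightLim (fun x => ∫ t in a..x, f t) x = ∫ t in a..x, f t :=
    fun x => (intervalIntegral.continuous_primitive hint a).continuousWithinAt.rightLim_eq
  rw [stieltjesMeasureOf, dif_pos hmono]
  refine Measure.ext_of_Ioc _ _ fun x y hxy => ?_
  rw [StieltjesFunction.measure_Ioc, hmono.stieltjesFunction_eq, hmono.stieltjesFunction_eq,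
    hright, hright, hsub, intervalIntegral.integral_of_le hxy.le,
    ofReal_integral_eq_lintegral_ofReal (hint x y).1 (ae_of_all _ hf0),
    withDensity_apply _ measurableSet_Ioc]

theorem setIntegral_stieltjesMeasureOf_intervalIntegral {f : ℝ → ℝ} (hf : LocallyIntegrable f)
    (hf0 : 0 ≤ f) (a : ℝ) (φ : ℝ → E) (s : Set ℝ) :
    ∫ x in s, φ x ∂stieltjesMeasureOf (fun x => ∫ t in a..x, f t)
      = ∫ x in s, f x • φ x := by
  rw [stieltjesMeasureOf_intervalIntegral hf hf0,
    setIntegral_withDensity_eq_setIntegral_toReal_smul₀' s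
      hf.aestronglyMeasurable.aemeasurable.ennreal_ofReal.restrict
      (ae_of_all _ fun _ => ENNReal.ofReal_lt_top)]
  simp only [ENNReal.toReal_ofReal (hf0 _)]

theorem setIntegral_Icc_stieltjesMeasureOf_integral_Ioc {b : ℝ → ℝ}
    (hb : ∀ T, IntegrableOn b (Ioc 0 T)) (hb0 : ∀ x, 0 < x → 0 ≤ b x) (φ : ℝ → ℝ)
    (s : ℝ) :
    ∫ a in Icc 0 s, φ a ∂stieltjesMeasureOf (fun t => ∫ u in Ioc 0 t, b u)
      = ∫ a in Ioc 0 s, b a * φ a := by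
  have hb0' : 0 ≤ (Ioi 0).indicator b := indicator_nonneg fun x hx => hb0 x hx
  simp_rw [integral_Ioc_zero_eq_intervalIntegral_indicator b]
  rw [setIntegral_stieltjesMeasureOf_intervalIntegral (locallyIntegrable_indicator_Ioi hb) hb0',
    ← setIntegral_congr_set Ioc_ae_eq_Icc]
  exact setIntegral_congr_fun measurableSet_Ioc fun x hx => by
    rw [indicator_of_mem (show x ∈ Ioi 0 from hx.1), smul_eq_mul]

theorem ae_eq_mul_of_integral_eq_one_sub_exp {S₀ : ℝ} {b f : ℝ → ℝ}
    (hb : ∀ T, IntegrableOn b (Ioc 0 T)) (hf : ∀ T, IntegrableOn f (Ioc 0 T))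
    (h : ∀ t, 0 ≤ t →
      ∫ s in Ioc 0 t, b s = S₀ * (1 - Real.exp (-∫ s in Ioc 0 t, f s))) :
    ∀ᵐ t, 0 < t → b t = (S₀ - ∫ s in Ioc 0 t, b s) * f t := by
  filter_upwards [ae_hasDerivAt_integral_Ioc_zero hb, ae_hasDerivAt_integral_Ioc_zero hf]
    with t hB hG ht
  have hΨ := (((hG ht).neg.exp).const_sub 1).const_mul S₀
  have hB' : HasDerivAt (fun u => S₀ * (1 - Real.exp (-∫ s in Ioc 0 u, f s))) (b t) t :=
    (hB ht).congr_of_eventuallyEq <|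
      Filter.eventually_of_mem (Ioi_mem_nhds ht) fun u hu => (h u (le_of_lt hu)).symm
  rw [hB'.unique hΨ, h t ht.le, Pi.neg_apply]
  ring

-- Truncation at `T ≥ s` turns the causal convolution at `s` into an honest convolution of
-- integrable functions.
theorem indicator_Iic_mul_indicator_Ioi_sub {β τ : ℝ → ℝ} {s T : ℝ} (hsT : s ≤ T) :
    (fun a => (Iic T).indicator β a * (Ioi 0).indicator τ (s - a))
      = (Iio s).indicator fun a => β a * τ (s - a) := by
  ext a
  by_cases ha : a < s
  · simp [indicator_of_mem (mem_Iic.2 (ha.le.trans hsT)), ha]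
  · simp [ha]

theorem integrableOn_Iic_integral_Iio_mul_sub {β τ : ℝ → ℝ}
    (hβ : ∀ T, IntegrableOn β (Iic T)) (hτ : IntegrableOn τ (Ioi 0)) (T : ℝ) :
    IntegrableOn (fun s => ∫ a in Iio s, β a * τ (s - a)) (Iic T) := by
  have hconv := ((integrable_indicator_iff measurableSet_Iic).2 (hβ T)).integrable_convolution
    (ContinuousLinearMap.mul ℝ ℝ) ((integrable_indicator_iff measurableSet_Ioi).2 hτ)
  refine hconv.integrableOn.congr_fun (fun s hs => ?_) measurableSet_Iic
  simp only [convolution_def, ContinuousLinearMap.mul_apply']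
  rw [indicator_Iic_mul_indicator_Ioi_sub hs, integral_indicator measurableSet_Iio]

theorem ae_integrableOn_Iio_mul_sub {β τ : ℝ → ℝ}
    (hβ : ∀ T, IntegrableOn β (Iic T)) (hτ : IntegrableOn τ (Ioi 0)) :
    ∀ᵐ s, IntegrableOn (fun a => β a * τ (s - a)) (Iio s) := by
  have h (n : ℕ) :
      ∀ᵐ s : ℝ, s ≤ n → IntegrableOn (fun a => β a * τ (s - a)) (Iio s) := by
    filter_upwards [((integrable_indicator_iff measurableSet_Iic).2 (hβ n)).ae_convolution_exists
      (ContinuousLinearMap.mul ℝ ℝ) ((integrable_indicator_iff measurableSet_Ioi).2 hτ)]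
      with s hs hsn
    simp only [ConvolutionExistsAt, ContinuousLinearMap.mul_apply'] at hs
    rwa [indicator_Iic_mul_indicator_Ioi_sub hsn, integrable_indicator_iff measurableSet_Iio] at hs
  filter_upwards [ae_all_iff.2 h] with s hs
  exact hs _ (Nat.le_ceil s)

noncomputable def extendedDensity (I₀ : ℝ) (g b : ℝ → ℝ) (a : ℝ) : ℝ :=
  if a < 0 then I₀ * g (-a) else b a

theorem integrableOn_Iic_extendedDensity (I₀ : ℝ) {g b : ℝ → ℝ}
    (hg : IntegrableOn g (Ioi 0)) (hb : ∀ T, IntegrableOn b (Ioc 0 T)) (T : ℝ) :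
    IntegrableOn (extendedDensity I₀ g b) (Iic T) := by
  have hg' : IntegrableOn (fun a => g (-a)) (Iio 0) :=
    IntegrableOn.comp_neg_Iio (c := (0 : ℝ)) (by rwa [neg_zero])
  have hneg : IntegrableOn (extendedDensity I₀ g b) (Iio 0) :=
    IntegrableOn.congr_fun (hg'.const_mul I₀)
      (fun a ha => by simp [extendedDensity, mem_Iio.1 ha]) measurableSet_Iio
  have hpos : IntegrableOn (extendedDensity I₀ g b) (Icc 0 T) :=
    ((integrableOn_Icc_iff_integrableOn_Ioc).2 (hb T)).congr_fun
      (fun a ha => by simp [extendedDensity, not_lt.2 ha.1]) measurableSet_Icc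
  refine (hneg.union hpos).mono_set fun a ha => ?_
  rcases lt_or_ge a 0 with h | h
  exacts [Or.inl h, Or.inr ⟨h, ha⟩]

theorem integral_Iio_extendedDensity_mul (I₀ : ℝ) (g b τ : ℝ → ℝ) {s : ℝ} (hs : 0 < s)
    (hint : IntegrableOn (fun a => extendedDensity I₀ g b a * τ (s - a)) (Iio s)) :
    ∫ a in Iio s, extendedDensity I₀ g b a * τ (s - a)
      = (∫ a in Ioc 0 s, b a * τ (s - a)) + I₀ * ∫ a in Ioi 0, g a * τ (a + s) := by
  rw [← Iio_union_Ico_eq_Iio hs.le] at hint ⊢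
  rw [setIntegral_union ((Iio_disjoint_Ici le_rfl).mono_right Ico_subset_Ici_self)
    measurableSet_Ico (hint.mono_set subset_union_left) (hint.mono_set subset_union_right),
    add_comm]
  congr 1
  · rw [setIntegral_congr_set Ico_ae_eq_Ioc]
    exact setIntegral_congr_fun measurableSet_Ioc fun a ha => by
      simp [extendedDensity, not_lt.2 ha.1.le]
  · calc ∫ a in Iio 0, extendedDensity I₀ g b a * τ (s - a)
        = ∫ a in Iio 0, I₀ * (g (-a) * τ (s - a)) :=
          setIntegral_congr_fun measurableSet_Iio fun a ha => by
            simp [extendedDensity, mem_Iio.1 ha, mul_assoc]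
      _ = I₀ * ∫ a in Ioi 0, g a * τ (a + s) := by
          rw [integral_const_mul, ← integral_Iic_eq_integral_Iio, ← neg_zero,
            ← integral_comp_neg_Ioi]
          simp only [neg_zero, neg_neg, sub_neg_eq_add, add_comm s]

theorem ae_integral_Iio_extendedDensity_mul (I₀ : ℝ) {g b τ : ℝ → ℝ}
    (hg : IntegrableOn g (Ioi 0)) (hb : ∀ T, IntegrableOn b (Ioc 0 T))
    (hτ : IntegrableOn τ (Ioi 0)) :
    ∀ᵐ s, 0 < s → ∫ a in Iio s, extendedDensity I₀ g b a * τ (s - a)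
      = (∫ a in Ioc 0 s, b a * τ (s - a)) + I₀ * ∫ a in Ioi 0, g a * τ (a + s) := by
  filter_upwards [ae_integrableOn_Iio_mul_sub (integrableOn_Iic_extendedDensity I₀ hg hb) hτ]
    with s hs hpos
  exact integral_Iio_extendedDensity_mul I₀ g b τ hpos hs

theorem integrableOn_Ioc_of_ae_eq_mul {c F f : ℝ → ℝ} {T : ℝ}
    (hF : IntegrableOn F (Ioc 0 T)) (hc : Measurable c) (hc01 : ∀ t, 0 ≤ t → c t ∈ Icc 0 1)
    (hf : ∀ᵐ s, 0 < s → f s = c s * F s) : IntegrableOn f (Ioc 0 T) := by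
  refine (hF.bdd_mul (c := 1) hc.aestronglyMeasurable ?_).congr ?_
  · filter_upwards [ae_restrict_mem measurableSet_Ioc] with s hs
    obtain ⟨hc0, hc1⟩ := hc01 s hs.1.le
    rwa [Real.norm_eq_abs, abs_of_nonneg hc0]
  · filter_upwards [ae_restrict_mem measurableSet_Ioc, ae_restrict_of_ae hf] with s hs h
    exact (h hs.1).symm

theorem renewal_equation_for_density_general
    (I0 : ℝ)
    (c : ℝ → ℝ) (hcm : Measurable c) (hc01 : ∀ t, 0 ≤ t → c t ∈ Set.Icc (0:ℝ) 1)
    (g : ℝ → ℝ)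
    (hg1 : ∫ a in Set.Ioi (0:ℝ), g a = 1)
    (τ : ℝ → ℝ)
    (hτint : IntegrableOn τ (Set.Ioi 0))
    (τbar : ℝ → ℝ) (hτbar : ∀ s, τbar s = ∫ a in Set.Ioi (0:ℝ), g a * τ (a + s))
    (B : ℝ → ℝ) (hB : IsDelaySolution I0 c τ τbar B)
    (b : ℝ → ℝ) (hb0 : ∀ s, 0 ≤ b s)
    (hbloc : ∀ t, 0 ≤ t → IntegrableOn b (Set.Icc 0 t))
    (hBb : ∀ t, 0 ≤ t → B t = ∫ s in Set.Ioc (0:ℝ) t, b s)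
    (S : ℝ → ℝ) (hS : ∀ t, S t = (1 - I0) - B t) :
    (∀ᵐ t ∂(volume.restrict (Set.Ioi (0:ℝ))),
      b t = c t * S t * ((∫ a in Set.Ioc (0:ℝ) t, b a * τ (t - a)) + I0 * τbar t)) ∧
    (∀ᵐ t ∂(volume.restrict (Set.Ioi (0:ℝ))),
      b t = c t * S t *
        ∫ a in Set.Iio t, (if a < 0 then I0 * g (-a) else b a) * τ (t - a)) := by
  obtain ⟨-, hBneg, -, hBeq⟩ := hB
  have hbint : ∀ T, IntegrableOn b (Ioc 0 T) := fun T =>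
    (hbloc _ (le_max_right T 0)).mono_set
      (Ioc_subset_Icc_self.trans (Icc_subset_Icc_right (le_max_left T 0)))
  obtain rfl : B = fun t => ∫ s in Ioc 0 t, b s := funext fun t => by
    rcases lt_or_ge t 0 with ht | ht
    · simp [hBneg t ht, Ioc_eq_empty_of_le ht.le]
    · exact hBb t ht
  simp only [setIntegral_Icc_stieltjesMeasureOf_integral_Ioc hbint fun x _ => hb0 x] at hBeq
  have hg : IntegrableOn g (Ioi 0) := Integrable.of_integral_ne_zero (hg1 ▸ one_ne_zero)
  have hsplit := ae_integral_Iio_extendedDensity_mul I0 hg hbint hτint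
  simp only [← hτbar] at hsplit
  have hf : ∀ T, IntegrableOn
      (fun s => c s * ((∫ a in Ioc 0 s, b a * τ (s - a)) + I0 * τbar s)) (Ioc 0 T) := fun T =>
    integrableOn_Ioc_of_ae_eq_mul ((integrableOn_Iic_integral_Iio_mul_sub
      (integrableOn_Iic_extendedDensity I0 hg hbint) hτint T).mono_set Ioc_subset_Iic_self)
      hcm hc01 (by filter_upwards [hsplit] with s h hs using by rw [h hs])
  have hmain := ae_eq_mul_of_integral_eq_one_sub_exp hbint hf hBeq
  constructor <;> rw [ae_restrict_iff' measurableSet_Ioi]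
  · filter_upwards [hmain] with t ht hpos
    rw [ht hpos, hS]
    ring
  · filter_upwards [hmain, hsplit] with t ht hF hpos
    simp only [extendedDensity] at hF
    rw [ht hpos, hS, ← hF hpos]
    ring

/-- **Renewal equation for the infection density.**
Let `B` be a nondecreasing solution of the delay equation (★) with density
`b` (so `B(t) = ∫_0^t b(s) ds`), and set `S(t) = S0 − B(t)`. Then for
Lebesgue-a.e. `t ≥ 0`,
`b(t) = c(t) S(t) (∫_0^t b(a) τ(t−a) da + I0 τbar(t))`;
equivalently, extending `b` to the negative half-line by `b(−u) = I0 g(u)`,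
`b(t) = c(t) S(t) ∫_{−∞}^t b(a) τ(t−a) da` for a.e. `t ≥ 0`. -/
theorem renewal_equation_for_density
    (I0 : ℝ) (hI0 : I0 ∈ Set.Ioo (0:ℝ) 1)
    (c : ℝ → ℝ) (hcm : Measurable c) (hc01 : ∀ t, 0 ≤ t → c t ∈ Set.Icc (0:ℝ) 1)
    (g : ℝ → ℝ) (hgm : Measurable g) (hg0 : ∀ a, 0 ≤ g a)
    (hg1 : ∫ a in Set.Ioi (0:ℝ), g a = 1)
    (τ : ℝ → ℝ) (hτm : Measurable τ) (hτ0 : ∀ a, 0 ≤ τ a)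
    (hτint : IntegrableOn τ (Set.Ioi 0))
    (τbar : ℝ → ℝ) (hτbar : ∀ s, τbar s = ∫ a in Set.Ioi (0:ℝ), g a * τ (a + s))
    (B : ℝ → ℝ) (hB : IsDelaySolution I0 c τ τbar B)
    (b : ℝ → ℝ) (hbm : Measurable b) (hb0 : ∀ s, 0 ≤ b s)
    (hbloc : ∀ t, 0 ≤ t → IntegrableOn b (Set.Icc 0 t))
    (hBb : ∀ t, 0 ≤ t → B t = ∫ s in Set.Ioc (0:ℝ) t, b s)
    (S : ℝ → ℝ) (hS : ∀ t, S t = (1 - I0) - B t) :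
    (∀ᵐ t ∂(volume.restrict (Set.Ioi (0:ℝ))),
      b t = c t * S t * ((∫ a in Set.Ioc (0:ℝ) t, b a * τ (t - a)) + I0 * τbar t)) ∧
    (∀ᵐ t ∂(volume.restrict (Set.Ioi (0:ℝ))),
      b t = c t * S t *
        ∫ a in Set.Iio t, (if a < 0 then I0 * g (-a) else b a) * τ (t - a)) :=
  renewal_equation_for_density_general I0 c hcm hc01 g hg1 τ hτint τbar hτbar B hB b hb0 hbloc hBb S
    hS
end

section
/- Mapping theorem for random measures converging in probability: let S and E be Polish spaces, and for each N let μ_N be a random probability measure on S such that μ_N converges in probability (for the weak topology on probability measures) to a deterministic probability measure μ on S. Let Φ : S → E be Borel measurable and continuous at every point of a Borel set A ⊆ S with μ(A) = 1. Then the pushforward random measures μ_N ∘ Φ^{−1} converge in probability (for the weak topology on probability measures on E) to μ ∘ Φ^{−1}. -/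
open MeasureTheory Set Filter Topology TopologicalSpace

/-! Pushing forward by `Φ` is continuous at `ν` for the Lévy–Prokhorov metric: by the
portmanteau theorem it suffices that `ν (Φ ⁻¹' U) ≤ liminf μₙ (Φ ⁻¹' U)` for open `U`, and this
holds because `Φ ⁻¹' U` differs from its interior only by a `ν`-null set. Convergence in
probability to a constant is preserved by any map continuous at that constant. -/

theorem MeasureTheory.ProbabilityMeasure.tendsto_map_of_tendsto_of_ae_continuousAt
    {S E ι : Type*} [MeasurableSpace S] [TopologicalSpace S] [OpensMeasurableSpace S]
    [HasOuterApproxClosed S] [MeasurableSpace E] [TopologicalSpace E] [OpensMeasurableSpace E]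
    {L : Filter ι} [L.IsCountablyGenerated] {μs : ι → ProbabilityMeasure S}
    {ν : ProbabilityMeasure S} (hμs : Tendsto μs L (𝓝 ν)) {Φ : S → E} (hΦ : Measurable Φ)
    (hcont : ∀ᵐ x ∂(ν : Measure S), ContinuousAt Φ x) :
    Tendsto (fun i ↦ (μs i).map hΦ.aemeasurable) L (𝓝 (ν.map hΦ.aemeasurable)) := by
  refine tendsto_of_forall_isOpen_le_liminf' fun U hU ↦ ?_
  simp only [ProbabilityMeasure.toMeasure_map, Measure.map_apply hΦ hU.measurableSet]
  have h_ae_interior : Φ ⁻¹' U ≤ᵐ[(ν : Measure S)] interior (Φ ⁻¹' U) := by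
    filter_upwards [hcont] with x hx hxU
    exact mem_interior_iff_mem_nhds.mpr (hx (hU.mem_nhds hxU))
  calc (ν : Measure S) (Φ ⁻¹' U)
      ≤ (ν : Measure S) (interior (Φ ⁻¹' U)) := measure_mono_ae h_ae_interior
    _ ≤ L.liminf fun i ↦ (μs i : Measure S) (interior (Φ ⁻¹' U)) :=
      ProbabilityMeasure.le_liminf_measure_open_of_tendsto hμs isOpen_interior
    _ ≤ L.liminf fun i ↦ (μs i : Measure S) (Φ ⁻¹' U) :=
      liminf_le_liminf (.of_forall fun i ↦ measure_mono interior_subset)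

theorem MeasureTheory.LevyProkhorov.continuousAt_map_probabilityMeasure
    {S E : Type*} [PseudoMetricSpace S] [MeasurableSpace S] [OpensMeasurableSpace S]
    [PseudoMetricSpace E] [SeparableSpace E] [MeasurableSpace E] [OpensMeasurableSpace E]
    {Φ : S → E} (hΦ : Measurable Φ) {ν : ProbabilityMeasure S}
    (hcont : ∀ᵐ x ∂(ν : Measure S), ContinuousAt Φ x) :
    ContinuousAt (fun μ : LevyProkhorov (ProbabilityMeasure S) ↦
      LevyProkhorov.ofMeasure (μ.toMeasure.map hΦ.aemeasurable)) (LevyProkhorov.ofMeasure ν) :=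
  LevyProkhorov.continuous_ofMeasure_probabilityMeasure.continuousAt.tendsto.comp <|
    ProbabilityMeasure.tendsto_map_of_tendsto_of_ae_continuousAt
      (LevyProkhorov.continuous_toMeasure_probabilityMeasure.tendsto _) hΦ hcont

theorem MeasureTheory.TendstoInMeasure.comp_continuousAt
    {α ι X Y : Type*} [MeasurableSpace α] {μ : Measure α} {l : Filter ι}
    [PseudoEMetricSpace X] [PseudoEMetricSpace Y] {f : ι → α → X} {x : X} {g : X → Y}
    (hf : TendstoInMeasure μ f l fun _ ↦ x) (hg : ContinuousAt g x) :
    TendstoInMeasure μ (fun i ω ↦ g (f i ω)) l fun _ ↦ g x := by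
  intro ε hε
  obtain ⟨δ, hδ, hgδ⟩ := EMetric.continuousAt_iff.mp hg ε hε
  have h_subset : ∀ i, {ω | ε ≤ edist (g (f i ω)) (g x)} ⊆ {ω | δ ≤ edist (f i ω) x} :=
    fun i ω hω ↦ not_lt.mp fun h ↦ (hgδ h).not_ge hω
  exact tendsto_of_tendsto_of_tendsto_of_le_of_le tendsto_const_nhds (hf δ hδ)
    (fun _ ↦ zero_le) fun i ↦ measure_mono (h_subset i)

theorem random_measures_mapping_theorem_general
    {S : Type*} [MetricSpace S] [MeasurableSpace S] [BorelSpace S]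
    {E : Type*} [MetricSpace E] [PolishSpace E] [MeasurableSpace E] [BorelSpace E]
    {Ω : Type*} [MeasurableSpace Ω] (P : Measure Ω)
    (μN : ℕ → Ω → Measure S) (hprob : ∀ N ω, IsProbabilityMeasure (μN N ω))
    (ν : Measure S) [IsProbabilityMeasure ν]
    (hconv : ∀ ε : ℝ, 0 < ε →
      Tendsto (fun N => P {ω | ε ≤ levyProkhorovDist (μN N ω) ν})
        atTop (nhds 0))
    (Φ : S → E) (hΦ : Measurable Φ)
    (A : Set S) (hA : MeasurableSet A) (hνA : ν A = 1)
    (hcont : ∀ x ∈ A, ContinuousAt Φ x) :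
    ∀ ε : ℝ, 0 < ε →
      Tendsto (fun N => P {ω | ε ≤ levyProkhorovDist ((μN N ω).map Φ) (ν.map Φ)})
        atTop (nhds 0) := by
  let νP : ProbabilityMeasure S := ⟨ν, inferInstance⟩
  let μP (N : ℕ) (ω : Ω) : ProbabilityMeasure S := ⟨μN N ω, hprob N ω⟩
  have hcont_ae : ∀ᵐ x ∂ν, ContinuousAt Φ x := by
    have hA_ae : ∀ᵐ x ∂ν, x ∈ A := by
      simpa [hνA] using ae_mem_iff_measure_eq (μ := ν) hA.nullMeasurableSet
    filter_upwards [hA_ae] using hcont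
  have hconvLP : TendstoInMeasure P (fun N ω ↦ LevyProkhorov.ofMeasure (μP N ω)) atTop
      fun _ ↦ LevyProkhorov.ofMeasure νP :=
    tendstoInMeasure_iff_dist.mpr hconv
  exact tendstoInMeasure_iff_dist.mp <| hconvLP.comp_continuousAt <|
    LevyProkhorov.continuousAt_map_probabilityMeasure hΦ (ν := νP) hcont_ae

/-- **Mapping theorem for random measures converging in probability.**
Let `S` and `E` be Polish spaces and, for each `N`, let `μN N` be a random
probability measure on `S` converging in probability (in the Lévy–Prokhorov
metric, which metrizes the topology of weak convergence) to a deterministic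
probability measure `ν` on `S`. Let `Φ : S → E` be Borel measurable and
continuous at every point of a Borel set `A ⊆ S` with `ν(A) = 1`. Then the
pushforward random measures `μN N ∘ Φ⁻¹` converge in probability to
`ν ∘ Φ⁻¹`. -/
theorem random_measures_mapping_theorem
    {S : Type*} [MetricSpace S] [PolishSpace S] [MeasurableSpace S] [BorelSpace S]
    {E : Type*} [MetricSpace E] [PolishSpace E] [MeasurableSpace E] [BorelSpace E]
    {Ω : Type*} [MeasurableSpace Ω] (P : Measure Ω) [IsProbabilityMeasure P]
    (μN : ℕ → Ω → Measure S) (hprob : ∀ N ω, IsProbabilityMeasure (μN N ω))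
    (ν : Measure S) [IsProbabilityMeasure ν]
    (hconv : ∀ ε : ℝ, 0 < ε →
      Tendsto (fun N => P {ω | ε ≤ levyProkhorovDist (μN N ω) ν})
        atTop (nhds 0))
    (Φ : S → E) (hΦ : Measurable Φ)
    (A : Set S) (hA : MeasurableSet A) (hνA : ν A = 1)
    (hcont : ∀ x ∈ A, ContinuousAt Φ x) :
    ∀ ε : ℝ, 0 < ε →
      Tendsto (fun N => P {ω | ε ≤ levyProkhorovDist ((μN N ω).map Φ) (ν.map Φ)})
        atTop (nhds 0) :=
  random_measures_mapping_theorem_general P μN hprob ν hconv Φ hΦ A hA hνA hcont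
end
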